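/- arXiv:1204.3346 — 5 statements merged into one kernel-verified Lean document; each statement's English description precedes it below -/
import Mathlib

section
/- For any finite poset x with |x| ≥ 2, x has a minimal vertex possessing a single-parent child (i.e., a minimal element a and an element b whose unique lower cover is a) if and only if x can be grown from the 2-element chain by successively adjoining maximal elements. -/
/-- A causet: a finite partial order on a finite set of labels. -/
structure Causet where
  carrier : Finset ℕ
  rel : ℕ → ℕ → Prop
  rel_mem : ∀ a b, rel a b → a ∈ carrier ∧ b ∈ carrier
  irrefl : ∀ a, ¬ rel a a
  trans : ∀ a b c, rel a b → rel b c → rel a c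

namespace Causet

/-- A minimal vertex. -/
def Minimal (x : Causet) (a : ℕ) : Prop :=
  a ∈ x.carrier ∧ ∀ b, ¬ x.rel b a

/-- A maximal vertex. -/
def Maximal (x : Causet) (a : ℕ) : Prop :=
  a ∈ x.carrier ∧ ∀ b, ¬ x.rel a b

/-- `a` is a parent of `b` (a lower cover). -/
def Parent (x : Causet) (a b : ℕ) : Prop :=
  x.rel a b ∧ ∀ c, ¬ (x.rel a c ∧ x.rel c b)

/-- `y` is obtained from `x` by adjoining the single new element `a`, maximal in `y`. -/
def ProducesWith (x y : Causet) (a : ℕ) : Prop :=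
  a ∉ x.carrier ∧ y.carrier = insert a x.carrier ∧ y.Maximal a ∧
    ∀ u v, u ∈ x.carrier → v ∈ x.carrier → (y.rel u v ↔ x.rel u v)

/-- `x → y`: `y` is obtained from `x` by adjoining a single maximal element. -/
def Produces (x y : Causet) : Prop := ∃ a, ProducesWith x y a

/-- `y` is a product of `x`: `y = x` or there is a chain of productions from `x` to `y`. -/
def ProductOf (x y : Causet) : Prop := Relation.ReflTransGen Produces x y

/-- `x` is (a copy of) the 2-element chain. -/
def IsTwoChain (x : Causet) : Prop :=
  ∃ a b, a ≠ b ∧ x.carrier = {a, b} ∧ x.rel a b ∧ ∀ u v, x.rel u v → u = a ∧ v = b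

/-- `x` is (a copy of) the 2-element antichain. -/
def IsTwoAntichain (x : Causet) : Prop :=
  ∃ a b, a ≠ b ∧ x.carrier = {a, b} ∧ ∀ u v, ¬ x.rel u v

/-- `x` has at least two minimal vertices. -/
def TwoMinimal (x : Causet) : Prop :=
  ∃ a b, a ≠ b ∧ x.Minimal a ∧ x.Minimal b

/-- The minimal vertex `a` has a single-parent child (a child whose unique parent is `a`). -/
def MinWithSPC (x : Causet) (a : ℕ) : Prop :=
  x.Minimal a ∧ ∃ c, x.Parent a c ∧ ∀ d, x.Parent d c → d = a

/-- `x` is mixed: at least two minimal vertices, at least one of which has a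
single-parent child. -/
def Mixed (x : Causet) : Prop :=
  TwoMinimal x ∧ ∃ a, MinWithSPC x a

end Causet

/-! If `a` is minimal and is the only parent of `c`, then `a` is the only element below `c`, so
`{a, c}` is a down-set carrying a 2-element chain. A down-set grows to the whole causet by
repeatedly adjoining a minimal element of its complement, which is maximal in the enlarged
down-set. Conversely, adjoining a maximal element creates no relation below an old element, so
minimality and parents of old elements survive, starting from the 2-element chain. -/

theorem wellFounded_of_irrefl_of_trans {α : Type*} {r : α → α → Prop} (s : Finset α)
    (hs : ∀ a b, r a b → a ∈ s) (hirr : ∀ a, ¬ r a a)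
    (htr : ∀ a b c, r a b → r b c → r a c) : WellFounded r := by
  classical
  refine Subrelation.wf (fun {a b} hab => ?_) (measure fun b => (s.filter (r · b)).card).wf
  refine Finset.card_lt_card ⟨fun u hu => ?_, fun hsub => hirr a ?_⟩
  · simp only [Finset.mem_filter] at hu ⊢
    exact ⟨hu.1, htr _ _ _ hu.2 hab⟩
  · exact (Finset.mem_filter.1 (hsub (Finset.mem_filter.2 ⟨hs a b hab, hab⟩))).2

namespace Causet

variable (x : Causet)

theorem wellFounded_rel : WellFounded x.rel :=
  wellFounded_of_irrefl_of_trans x.carrier (fun a b h => (x.rel_mem a b h).1) x.irrefl x.trans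

theorem wellFounded_flip_rel : WellFounded (flip x.rel) :=
  wellFounded_of_irrefl_of_trans x.carrier (fun a b h => (x.rel_mem b a h).2) x.irrefl
    fun a b c hab hbc => x.trans c b a hbc hab

theorem rel_asymm {a b : ℕ} (hab : x.rel a b) : ¬ x.rel b a :=
  fun hba => x.irrefl a (x.trans _ _ _ hab hba)

theorem ext {x y : Causet} (hc : x.carrier = y.carrier) (hr : x.rel = y.rel) : x = y := by
  cases x; cases y; cases hc; cases hr; rfl

def restrict (S : Finset ℕ) : Causet where
  carrier := S ∩ x.carrier
  rel u v := x.rel u v ∧ u ∈ S ∧ v ∈ S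
  rel_mem a b h := ⟨Finset.mem_inter.2 ⟨h.2.1, (x.rel_mem a b h.1).1⟩,
    Finset.mem_inter.2 ⟨h.2.2, (x.rel_mem a b h.1).2⟩⟩
  irrefl a h := x.irrefl a h.1
  trans _ _ _ h₁ h₂ := ⟨x.trans _ _ _ h₁.1 h₂.1, h₁.2.1, h₂.2.2⟩

theorem restrict_eq_self {S : Finset ℕ} (hS : x.carrier ⊆ S) : x.restrict S = x := by
  refine ext (Finset.inter_eq_right.2 hS) ?_
  funext u v
  exact propext ⟨And.left, fun h => ⟨h, hS (x.rel_mem u v h).1, hS (x.rel_mem u v h).2⟩⟩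

theorem isTwoChain_restrict_pair {a c : ℕ} (hac : x.rel a c) :
    (x.restrict {a, c}).IsTwoChain := by
  have hne : a ≠ c := fun h => x.irrefl a (h ▸ hac)
  refine ⟨a, c, hne, ?_, ⟨hac, by simp, by simp⟩, ?_⟩
  · exact Finset.inter_eq_left.2 (Finset.insert_subset (x.rel_mem a c hac).1
      (Finset.singleton_subset_iff.2 (x.rel_mem a c hac).2))
  · rintro u v ⟨huv, hu, hv⟩
    simp only [Finset.mem_insert, Finset.mem_singleton] at hu hv
    rcases hu with rfl | rfl <;> rcases hv with rfl | rfl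
    · exact absurd huv (x.irrefl _)
    · exact ⟨rfl, rfl⟩
    · exact absurd huv (x.rel_asymm hac)
    · exact absurd huv (x.irrefl _)

def IsDownSet (S : Finset ℕ) : Prop :=
  ∀ u v, x.rel u v → v ∈ S → u ∈ S

variable {x}

theorem IsDownSet.insert_of_below {S : Finset ℕ} {v : ℕ} (hS : x.IsDownSet S)
    (hv : ∀ u, x.rel u v → u ∈ S) : x.IsDownSet (insert v S) := by
  intro u w huw hw
  rcases Finset.mem_insert.1 hw with rfl | hw
  · exact Finset.mem_insert_of_mem (hv u huw)
  · exact Finset.mem_insert_of_mem (hS u w huw hw)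

theorem IsDownSet.producesWith_restrict_insert {S : Finset ℕ} {v : ℕ} (hS : x.IsDownSet S)
    (hv : v ∈ x.carrier) (hvS : v ∉ S) :
    (x.restrict S).ProducesWith (x.restrict (insert v S)) v := by
  refine ⟨fun h => hvS (Finset.mem_inter.1 h).1, ?_, ⟨?_, ?_⟩, ?_⟩
  · exact Finset.insert_inter_of_mem hv
  · exact Finset.mem_inter.2 ⟨Finset.mem_insert_self _ _, hv⟩
  · rintro b ⟨hvb, -, hb⟩
    rcases Finset.mem_insert.1 hb with rfl | hb
    · exact x.irrefl _ hvb
    · exact hvS (hS v b hvb hb)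
  · intro u w hu hw
    have hu := (Finset.mem_inter.1 hu).1
    have hw := (Finset.mem_inter.1 hw).1
    exact ⟨fun h => ⟨h.1, hu, hw⟩,
      fun h => ⟨h.1, Finset.mem_insert_of_mem hu, Finset.mem_insert_of_mem hw⟩⟩

theorem IsDownSet.productOf_restrict {S : Finset ℕ} (hS : x.IsDownSet S) :
    (x.restrict S).ProductOf x := by
  by_cases hxS : x.carrier ⊆ S
  · rw [x.restrict_eq_self hxS]
    exact .refl
  · obtain ⟨v, ⟨hv, hvS⟩, hvmin⟩ := x.wellFounded_rel.has_min {v | v ∈ x.carrier ∧ v ∉ S}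
      (Set.not_subset.1 hxS)
    have hbelow : ∀ u, x.rel u v → u ∈ S := fun u huv =>
      by_contra fun huS => hvmin u ⟨(x.rel_mem u v huv).1, huS⟩ huv
    have hdecr : (x.carrier \ insert v S).card < (x.carrier \ S).card :=
      Finset.card_lt_card ⟨Finset.sdiff_subset_sdiff subset_rfl (Finset.subset_insert v S),
        fun h => (Finset.mem_sdiff.1 (h (Finset.mem_sdiff.2 ⟨hv, hvS⟩))).2
          (Finset.mem_insert_self v S)⟩
    exact .head ⟨v, hS.producesWith_restrict_insert hv hvS⟩
      (hS.insert_of_below hbelow).productOf_restrict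
termination_by (x.carrier \ S).card

theorem eq_or_rel_of_rel_of_parent_unique {a c : ℕ} (hc : ∀ d, x.Parent d c → d = a) :
    ∀ d, x.rel d c → d = a ∨ x.rel d a := by
  intro d
  induction d using x.wellFounded_flip_rel.induction with
  | _ d ih =>
    intro hdc
    by_cases hd : x.Parent d c
    · exact .inl (hc d hd)
    · obtain ⟨f, hdf, hfc⟩ : ∃ f, x.rel d f ∧ x.rel f c := by
        simpa [Parent, hdc] using hd
      rcases ih f hdf hfc with rfl | hfa
      · exact .inr hdf
      · exact .inr (x.trans _ _ _ hdf hfa)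

theorem isDownSet_pair_of_parent_unique {a c : ℕ} (ha : x.Minimal a)
    (hc : ∀ d, x.Parent d c → d = a) : x.IsDownSet {a, c} := by
  intro u v huv hv
  simp only [Finset.mem_insert, Finset.mem_singleton] at hv ⊢
  rcases hv with rfl | rfl
  · exact absurd huv (ha.2 u)
  · exact (eq_or_rel_of_rel_of_parent_unique hc u huv).imp_right
      fun hua => absurd hua (ha.2 u)

theorem IsTwoChain.exists_minWithSPC (hx : x.IsTwoChain) : ∃ a, x.MinWithSPC a := by
  obtain ⟨a, b, hab, hcar, hrel, honly⟩ := hx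
  refine ⟨a, ⟨by simp [hcar], fun u hu => hab (honly u a hu).2⟩, b, ⟨hrel, ?_⟩,
    fun d hd => (honly d b hd.1).1⟩
  rintro f ⟨haf, hfb⟩
  exact x.irrefl b ((honly a f haf).2 ▸ hfb)

namespace ProducesWith

variable {y : Causet} {e : ℕ}

theorem rel_iff (h : x.ProducesWith y e) {u v : ℕ} (hv : v ∈ x.carrier) :
    y.rel u v ↔ x.rel u v := by
  obtain ⟨-, hcar, ⟨-, hmax⟩, hrel⟩ := h
  refine ⟨fun huv => ?_, fun huv => (hrel u v (x.rel_mem u v huv).1 hv).2 huv⟩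
  have hu := (y.rel_mem u v huv).1
  rw [hcar, Finset.mem_insert] at hu
  rcases hu with rfl | hu
  · exact absurd huv (hmax v)
  · exact (hrel u v hu hv).1 huv

theorem minimal (h : x.ProducesWith y e) {a : ℕ} (ha : x.Minimal a) : y.Minimal a :=
  ⟨h.2.1 ▸ Finset.mem_insert_of_mem ha.1, fun b hba => ha.2 b ((h.rel_iff ha.1).1 hba)⟩

theorem parent_iff (h : x.ProducesWith y e) {d c : ℕ} (hc : c ∈ x.carrier) :
    y.Parent d c ↔ x.Parent d c := by
  unfold Parent
  simp only [h.rel_iff hc]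
  refine and_congr_right' (forall_congr' fun f => not_congr (and_congr_left fun hfc => ?_))
  exact h.rel_iff (x.rel_mem f c hfc).1

theorem minWithSPC (h : x.ProducesWith y e) {a : ℕ} (ha : x.MinWithSPC a) : y.MinWithSPC a := by
  obtain ⟨hmin, c, hac, honly⟩ := ha
  have hc := (x.rel_mem a c hac.1).2
  exact ⟨h.minimal hmin, c, (h.parent_iff hc).2 hac,
    fun d hd => honly d ((h.parent_iff hc).1 hd)⟩

end ProducesWith

end Causet

theorem stmt0_general (x : Causet) :
    (∃ a, Causet.MinWithSPC x a) ↔ ∃ z : Causet, z.IsTwoChain ∧ z.ProductOf x := by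
  constructor
  · rintro ⟨a, ha, c, hac, hc⟩
    exact ⟨x.restrict {a, c}, x.isTwoChain_restrict_pair hac.1,
      (Causet.isDownSet_pair_of_parent_unique ha hc).productOf_restrict⟩
  · rintro ⟨z, hz, hzx⟩
    induction hzx with
    | refl => exact hz.exists_minWithSPC
    | tail _ hstep ih =>
      obtain ⟨e, he⟩ := hstep
      exact ih.imp fun a => he.minWithSPC

/-- A finite poset `x` with `|x| ≥ 2` has a minimal vertex possessing a
single-parent child iff `x` can be grown from the 2-element chain by successively
adjoining maximal elements. -/
theorem stmt0 (x : Causet) (hx : 2 ≤ x.carrier.card) :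
    (∃ a, Causet.MinWithSPC x a) ↔ ∃ z : Causet, z.IsTwoChain ∧ z.ProductOf x :=
  stmt0_general x
end

section
/- A finite poset x is a product of the 2-element antichain if and only if x has at least two minimal vertices. -/
attribute [local instance] Classical.propDecidable

namespace Causet

/-- Restriction of a causet obtained by deleting one vertex. -/
def eraseC (x : Causet) (c : ℕ) : Causet where
  carrier := x.carrier.erase c
  rel a b := x.rel a b ∧ a ≠ c ∧ b ≠ c
  rel_mem := by
    rintro a b ⟨h, ha, hb⟩
    have hm := x.rel_mem a b h
    simp [Finset.mem_erase, ha, hb, hm.1, hm.2]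
  irrefl := fun a h => x.irrefl a h.1
  trans := fun a b c' h1 h2 => ⟨x.trans _ _ _ h1.1 h2.1, h1.2.1, h2.2.2⟩

lemma twoMinimal_of_produces {x y : Causet} (h : Produces x y) (hx : TwoMinimal x) :
    TwoMinimal y := by
  obtain ⟨a0, ha0, hcar, hmax, hiff⟩ := h
  obtain ⟨a, b, hab, ha, hb⟩ := hx
  have key : ∀ m, x.Minimal m → y.Minimal m := by
    rintro m ⟨hm, hmin⟩
    refine ⟨by rw [hcar]; exact Finset.mem_insert_of_mem hm, fun t ht => ?_⟩
    have htc := (y.rel_mem t m ht).1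
    rw [hcar] at htc
    rcases Finset.mem_insert.mp htc with rfl | htx
    · exact hmax.2 m ht
    · exact hmin t ((hiff t m htx hm).mp ht)
  exact ⟨a, b, hab, key a ha, key b hb⟩

lemma exists_max_above : ∀ (n : ℕ) (x : Causet) (d : ℕ), d ∈ x.carrier →
    (x.carrier.filter (fun e => x.rel d e)).card ≤ n →
    ∃ m, x.Maximal m ∧ (m = d ∨ x.rel d m) := by
  intro n
  induction n with
  | zero =>
    intro x d hd hcard
    refine ⟨d, ⟨hd, fun e he => ?_⟩, Or.inl rfl⟩
    have : e ∈ x.carrier.filter (fun e => x.rel d e) := by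
      simp [(x.rel_mem d e he).2, he]
    rw [Finset.card_eq_zero.mp (Nat.le_zero.mp hcard)] at this
    simp at this
  | succ n ih =>
    intro x d hd hcard
    by_cases hmax : ∀ e, ¬ x.rel d e
    · exact ⟨d, ⟨hd, hmax⟩, Or.inl rfl⟩
    · push_neg at hmax
      obtain ⟨e, he⟩ := hmax
      have hem : e ∈ x.carrier := (x.rel_mem _ _ he).2
      have hsub : x.carrier.filter (fun f => x.rel e f) ⊂
          x.carrier.filter (fun f => x.rel d f) := by
        constructor
        · intro f hf
          simp only [Finset.mem_filter] at hf ⊢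
          exact ⟨hf.1, x.trans _ _ _ he hf.2⟩
        · intro hcon
          have : e ∈ x.carrier.filter (fun f => x.rel e f) := hcon (by simp [hem, he])
          simp only [Finset.mem_filter] at this
          exact x.irrefl e this.2
      have hle : (x.carrier.filter (fun f => x.rel e f)).card ≤ n := by
        have := Finset.card_lt_card hsub; omega
      obtain ⟨m, hm, hc⟩ := ih x e hem hle
      exact ⟨m, hm, Or.inr (hc.elim (fun h => h ▸ he) (fun h => x.trans _ _ _ he h))⟩

lemma rev_aux : ∀ (n : ℕ) (x : Causet), x.carrier.card ≤ n → TwoMinimal x →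
    ∃ z : Causet, z.IsTwoAntichain ∧ z.ProductOf x := by
  intro n
  induction n with
  | zero =>
    rintro x hcard ⟨a, b, hab, ha, hb⟩
    have : a ∈ x.carrier := ha.1
    rw [Finset.card_eq_zero.mp (Nat.le_zero.mp hcard)] at this
    simp at this
  | succ n ih =>
    rintro x hcard ⟨a, b, hab, ha, hb⟩
    by_cases hsmall : x.carrier ⊆ ({a, b} : Finset ℕ)
    · have hcar : x.carrier = {a, b} := by
        apply Finset.Subset.antisymm hsmall
        intro t ht
        rcases Finset.mem_insert.mp ht with rfl | ht
        · exact ha.1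
        · rw [Finset.mem_singleton.mp ht]; exact hb.1
      refine ⟨x, ⟨a, b, hab, hcar, fun u v huv => ?_⟩, Relation.ReflTransGen.refl⟩
      have hv : v ∈ x.carrier := (x.rel_mem u v huv).2
      rw [hcar] at hv
      rcases Finset.mem_insert.mp hv with rfl | hv
      · exact ha.2 u huv
      · rw [Finset.mem_singleton.mp hv] at huv; exact hb.2 u huv
    · obtain ⟨d, hd, hdab⟩ := Finset.not_subset.mp hsmall
      simp only [Finset.mem_insert, Finset.mem_singleton, not_or] at hdab
      obtain ⟨m, hm, hmd⟩ := exists_max_above x.carrier.card x d hd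
        (Finset.card_filter_le _ _)
      have hma : m ≠ a := by
        rintro rfl
        rcases hmd with rfl | hrel
        · exact hdab.1 rfl
        · exact ha.2 d hrel
      have hmb : m ≠ b := by
        rintro rfl
        rcases hmd with rfl | hrel
        · exact hdab.2 rfl
        · exact hb.2 d hrel
      set x' := x.eraseC m with hx'
      have hmc : m ∈ x.carrier := hm.1
      have hprod : ProducesWith x' x m := by
        refine ⟨by simp [hx', eraseC], ?_, hm, ?_⟩
        · simp only [hx', eraseC]
          rw [Finset.insert_erase hmc]
        · intro u v hu hv
          simp only [hx', eraseC, Finset.mem_erase] at hu hv ⊢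
          constructor
          · intro h; exact ⟨h, hu.1, hv.1⟩
          · intro h; exact h.1
      have hmin : TwoMinimal x' := by
        refine ⟨a, b, hab, ⟨?_, fun t h => ha.2 t h.1⟩, ⟨?_, fun t h => hb.2 t h.1⟩⟩
        · simp [hx', eraseC, Finset.mem_erase, Ne.symm hma, ha.1]
        · simp [hx', eraseC, Finset.mem_erase, Ne.symm hmb, hb.1]
      have hcard' : x'.carrier.card ≤ n := by
        have : x'.carrier.card < x.carrier.card := by
          simp only [hx', eraseC]
          exact Finset.card_erase_lt_of_mem hmc
        omega
      obtain ⟨z, hz, hp⟩ := ih x' hcard' hmin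
      exact ⟨z, hz, hp.tail ⟨m, hprod⟩⟩

end Causet

/-- A finite poset `x` is a product of the 2-element antichain iff
`x` has at least two minimal vertices. -/
theorem stmt1 (x : Causet) :
    (∃ z : Causet, z.IsTwoAntichain ∧ z.ProductOf x) ↔ Causet.TwoMinimal x := by
  constructor
  · rintro ⟨z, hz, hprod⟩
    have base : Causet.TwoMinimal z := by
      obtain ⟨a, b, hab, hc, hrel⟩ := hz
      exact ⟨a, b, hab, ⟨by simp [hc], fun t => hrel t a⟩, ⟨by simp [hc], fun t => hrel t b⟩⟩
    induction hprod with
    | refl => exact base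
    | tail _ h2 ih => exact Causet.twoMinimal_of_produces h2 ih
  · intro h
    exact Causet.rev_aux x.carrier.card x le_rfl h
end

section
/- A finite poset x with |x| ≥ 2 fails to be a product of the 2-element antichain (equivalently, is a pure antimatter causet) if and only if x has exactly one minimal vertex. -/
/-!
A production only adds a maximal element, so minimal elements persist along products: a product
of the 2-element antichain has two minimal elements. Conversely, if `a ≠ b` are minimal, deleting a
maximal element other than `a` and `b` is an inverse production that keeps both minimal; repeating
this ends in the antichain `{a, b}`.
-/

namespace Causet

open scoped Classical in
noncomputable def below (x : Causet) (a : ℕ) : Finset ℕ := x.carrier.filter (x.rel · a)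

variable {x : Causet}

theorem mem_below {a c : ℕ} : c ∈ x.below a ↔ c ∈ x.carrier ∧ x.rel c a := by
  classical
  simp [below]

theorem card_below_lt_of_rel {a b : ℕ} (h : x.rel a b) : (x.below a).card < (x.below b).card := by
  refine Finset.card_lt_card ⟨fun c hc => ?_, fun hsub => ?_⟩
  · obtain ⟨hc, hca⟩ := mem_below.mp hc
    exact mem_below.mpr ⟨hc, x.trans _ _ _ hca h⟩
  · exact x.irrefl a (mem_below.mp (hsub (mem_below.mpr ⟨(x.rel_mem _ _ h).1, h⟩))).2

theorem exists_mem_forall_not_rel {s : Finset ℕ} (hs : s.Nonempty) :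
    ∃ m ∈ s, ∀ c ∈ s, ¬ x.rel m c := by
  obtain ⟨m, hm, hmax⟩ := s.exists_max_image (fun a => (x.below a).card) hs
  exact ⟨m, hm, fun c hc hmc => (card_below_lt_of_rel hmc).not_ge (hmax c hc)⟩

theorem exists_minimal (hx : x.carrier.Nonempty) : ∃ a, x.Minimal a := by
  obtain ⟨m, hm, hmin⟩ := x.carrier.exists_min_image (fun a => (x.below a).card) hx
  exact ⟨m, hm, fun c hcm => (card_below_lt_of_rel hcm).not_ge (hmin c (x.rel_mem _ _ hcm).1)⟩

theorem exists_maximal_ne_of_minimal {a b : ℕ} (ha : x.Minimal a) (hb : x.Minimal b)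
    (hcard : 2 < x.carrier.card) : ∃ m, x.Maximal m ∧ m ≠ a ∧ m ≠ b := by
  have hne : (x.carrier \ {a, b}).Nonempty := by
    rw [← Finset.card_pos]
    have := Finset.le_card_sdiff {a, b} x.carrier
    have := Finset.card_le_two (a := a) (b := b)
    omega
  obtain ⟨m, hm, hmax⟩ := exists_mem_forall_not_rel (x := x) hne
  simp only [Finset.mem_sdiff, Finset.mem_insert, Finset.mem_singleton, not_or] at hm
  refine ⟨m, ⟨hm.1, fun c hmc => hmax c ?_ hmc⟩, hm.2⟩
  simp only [Finset.mem_sdiff, Finset.mem_insert, Finset.mem_singleton, not_or]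
  refine ⟨(x.rel_mem _ _ hmc).2, ?_, ?_⟩ <;> rintro rfl
  exacts [ha.2 m hmc, hb.2 m hmc]

def erase (x : Causet) (m : ℕ) : Causet where
  carrier := x.carrier.erase m
  rel u v := x.rel u v ∧ u ≠ m ∧ v ≠ m
  rel_mem _ _ h := ⟨Finset.mem_erase.mpr ⟨h.2.1, (x.rel_mem _ _ h.1).1⟩,
    Finset.mem_erase.mpr ⟨h.2.2, (x.rel_mem _ _ h.1).2⟩⟩
  irrefl a h := x.irrefl a h.1
  trans _ _ _ h₁ h₂ := ⟨x.trans _ _ _ h₁.1 h₂.1, h₁.2.1, h₂.2.2⟩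

theorem Maximal.producesWith_erase {m : ℕ} (hm : x.Maximal m) : (x.erase m).ProducesWith x m :=
  ⟨Finset.notMem_erase m _, (Finset.insert_erase hm.1).symm, hm, fun _ _ hu hv =>
    ⟨fun h => ⟨h, Finset.ne_of_mem_erase hu, Finset.ne_of_mem_erase hv⟩, And.left⟩⟩

theorem Minimal.erase {a m : ℕ} (ha : x.Minimal a) (ham : a ≠ m) : (x.erase m).Minimal a :=
  ⟨Finset.mem_erase.mpr ⟨ham, ha.1⟩, fun c hc => ha.2 c hc.1⟩

theorem Minimal.of_produces {y : Causet} {a : ℕ} (ha : x.Minimal a) (h : x.Produces y) :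
    y.Minimal a := by
  obtain ⟨m, -, hcar, hmax, hrel⟩ := h
  refine ⟨hcar ▸ Finset.mem_insert_of_mem ha.1, fun c hca => ?_⟩
  rcases Finset.mem_insert.mp (hcar ▸ (y.rel_mem _ _ hca).1) with rfl | hc
  · exact hmax.2 a hca
  · exact ha.2 c ((hrel c a hc ha.1).mp hca)

theorem Minimal.of_productOf {y : Causet} {a : ℕ} (ha : x.Minimal a) (h : x.ProductOf y) :
    y.Minimal a := by
  induction h with
  | refl => exact ha
  | tail _ hstep ih => exact ih.of_produces hstep

theorem isTwoAntichain_of_minimal {a b : ℕ} (ha : x.Minimal a) (hb : x.Minimal b) (hab : a ≠ b)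
    (hcard : x.carrier.card = 2) : x.IsTwoAntichain := by
  have hcar : x.carrier = {a, b} := (Finset.eq_of_subset_of_card_le
    (Finset.insert_subset ha.1 (Finset.singleton_subset_iff.mpr hb.1))
    (by rw [hcard, Finset.card_pair hab])).symm
  refine ⟨a, b, hab, hcar, fun u v huv => ?_⟩
  have hv := (x.rel_mem _ _ huv).2
  rw [hcar, Finset.mem_insert, Finset.mem_singleton] at hv
  rcases hv with rfl | rfl
  exacts [ha.2 u huv, hb.2 u huv]

theorem exists_isTwoAntichain_productOf {a b : ℕ} (ha : x.Minimal a) (hb : x.Minimal b)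
    (hab : a ≠ b) : ∃ z : Causet, z.IsTwoAntichain ∧ z.ProductOf x := by
  induction hn : x.carrier.card using Nat.strong_induction_on generalizing x with
  | _ n ih =>
    have htwo : 2 ≤ n := hn ▸ (Finset.card_pair hab).symm.le.trans
      (Finset.card_le_card (Finset.insert_subset ha.1 (Finset.singleton_subset_iff.mpr hb.1)))
    rcases htwo.eq_or_lt with rfl | hlt
    · exact ⟨x, isTwoAntichain_of_minimal ha hb hab hn, .refl⟩
    obtain ⟨m, hm, hma, hmb⟩ := exists_maximal_ne_of_minimal ha hb (hn ▸ hlt)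
    have hcard : (x.erase m).carrier.card = n - 1 := by
      rw [erase, Finset.card_erase_of_mem hm.1, hn]
    obtain ⟨z, hz, hzx⟩ := ih (n - 1) (by omega) (ha.erase hma.symm) (hb.erase hmb.symm) hcard
    exact ⟨z, hz, hzx.tail ⟨m, hm.producesWith_erase⟩⟩

end Causet

/-- A finite poset `x` with `|x| ≥ 2` fails to be a product of the
2-element antichain iff `x` has exactly one minimal vertex. -/
theorem stmt3 (x : Causet) (hx : 2 ≤ x.carrier.card) :
    (¬ ∃ z : Causet, z.IsTwoAntichain ∧ z.ProductOf x) ↔ (∃! a, x.Minimal a) := by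
  constructor
  · intro hno
    obtain ⟨a, ha⟩ := Causet.exists_minimal (Finset.card_pos.mp (zero_lt_two.trans_le hx))
    refine ⟨a, ha, fun b hb => by_contra fun hba => hno ?_⟩
    exact Causet.exists_isTwoAntichain_productOf hb ha hba
  · rintro ⟨a, -, huniq⟩ ⟨z, ⟨u, v, huv, hcar, hnone⟩, hzx⟩
    have hu : z.Minimal u := ⟨by simp [hcar], fun c => hnone c u⟩
    have hv : z.Minimal v := ⟨by simp [hcar], fun c => hnone c v⟩
    exact huv ((huniq u (hu.of_productOf hzx)).trans (huniq v (hv.of_productOf hzx)).symm)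
end

section
/- If x → y via adjoining a maximal element a, x has at least two minimal vertices none of which has a single-parent child (x is a pure matter causet), and y is mixed, then a has exactly one parent and exactly one ancestor in y, so p_c(x→y) = m(x→y)·c_1/λ_c(n,0) with n = |x|. -/
/-- `λ_c(s,r) = Σ_{k=r}^{s} binom(s−r, k−r) c_k`. -/
def lam (c : ℕ → ℝ) (s r : ℕ) : ℝ :=
  ∑ k ∈ Finset.Icc r s, ((s - r).choose (k - r) : ℝ) * c k

lemma exists_rel_max (r : ℕ → ℕ → Prop) (htr : ∀ a b c, r a b → r b c → r a c)
    (hirr : ∀ a, ¬ r a a) :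
    ∀ s : Finset ℕ, s.Nonempty → ∃ z ∈ s, ∀ w ∈ s, ¬ r z w := by
  classical
  intro s
  induction s using Finset.strongInductionOn with
  | _ s ih =>
    intro hs
    obtain ⟨z, hz⟩ := hs
    by_cases hmax : ∀ w ∈ s, ¬ r z w
    · exact ⟨z, hz, hmax⟩
    · push_neg at hmax
      obtain ⟨w, hw, hzw⟩ := hmax
      have hsub : s.filter (fun v => r z v) ⊂ s := by
        refine Finset.filter_ssubset.mpr ⟨z, hz, hirr z⟩
      obtain ⟨z', hz', hmax'⟩ := ih _ hsub ⟨w, Finset.mem_filter.mpr ⟨hw, hzw⟩⟩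
      have hzz' : r z z' := (Finset.mem_filter.mp hz').2
      refine ⟨z', (Finset.mem_filter.mp hz').1, fun v hv hrv => ?_⟩
      exact hmax' v (Finset.mem_filter.mpr ⟨hv, htr _ _ _ hzz' hrv⟩) hrv

/-- If `x → y` via adjoining a maximal element `a`, `x` is a pure matter
causet (at least two minimal vertices, none with a single-parent child) and `y` is
mixed, then `a` has exactly one parent and exactly one ancestor in `y`, so
`p_c(x→y) = m(x→y)·c_1/λ_c(n,0)` with `n = |x|`. -/
theorem stmt8 (x y : Causet) (a : ℕ) (h : x.ProducesWith y a)
    (h2 : Causet.TwoMinimal x)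
    (hns : ∀ b, x.Minimal b → ¬ ∃ c, x.Parent b c ∧ ∀ d, x.Parent d c → d = b)
    (hmix : y.Mixed) :
    (∃ b, {u | y.rel u a} = {b} ∧ {u | y.Parent u a} = {b}) ∧
    ∀ (c : ℕ → ℝ) (m : ℝ),
      m * lam c {u | y.rel u a}.ncard {u | y.Parent u a}.ncard / lam c x.carrier.card 0
        = m * c 1 / lam c x.carrier.card 0 := by
  obtain ⟨hna, hcar, ⟨hamem, hamax⟩, hagree⟩ := h
  obtain ⟨_, m, ⟨⟨hmmem, hmmin⟩, cc, hpar, huniq⟩⟩ := hmix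
  -- m ≠ a
  have hmne : m ≠ a := by
    rintro rfl
    exact hamax cc hpar.1
  have hmx : m ∈ x.carrier := by
    have := hcar ▸ hmmem
    simpa [hmne] using this
  -- m is minimal in x
  have hminx : x.Minimal m := by
    refine ⟨hmx, fun b hb => ?_⟩
    have hbx := (x.rel_mem _ _ hb).1
    exact hmmin b ((hagree b m hbx hmx).mpr hb)
  -- the single-parent child cc must equal a
  have hcmem : cc ∈ y.carrier := (y.rel_mem _ _ hpar.1).2
  have hcc : cc = a := by
    by_contra hne
    have hcx : cc ∈ x.carrier := by
      have := hcar ▸ hcmem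
      simpa [hne] using this
    -- translate parenthood to x
    have hxy : ∀ d, x.Parent d cc → y.Parent d cc := by
      intro d ⟨hrel, hint⟩
      have hdx := (x.rel_mem _ _ hrel).1
      refine ⟨(hagree d cc hdx hcx).mpr hrel, fun z ⟨h1, h2⟩ => ?_⟩
      have hzmem := (y.rel_mem _ _ h1).2
      rcases Finset.mem_insert.mp (hcar ▸ hzmem) with rfl | hzx
      · exact absurd h2 (hamax cc)
      · exact hint z ⟨(hagree d z hdx hzx).mp h1, (hagree z cc hzx hcx).mp h2⟩
    have hxpar : x.Parent m cc := by
      refine ⟨(hagree m cc hmx hcx).mp hpar.1, fun z ⟨h1, h2⟩ => ?_⟩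
      have hzx := (x.rel_mem _ _ h1).2
      exact hpar.2 z ⟨(hagree m z hmx hzx).mpr h1, (hagree z cc hzx hcx).mpr h2⟩
    exact hns m hminx ⟨cc, hxpar, fun d hd => huniq d (hxy d hd)⟩
  subst cc
  -- key: every y-ancestor of a equals m
  have hanc : ∀ u, y.rel u a → u = m := by
    intro u hu
    classical
    have hux : u ∈ y.carrier := (y.rel_mem _ _ hu).1
    set S : Finset ℕ := y.carrier.filter (fun z => y.rel z a ∧ (z = u ∨ y.rel u z)) with hS
    have huS : u ∈ S := Finset.mem_filter.mpr ⟨hux, hu, Or.inl rfl⟩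
    obtain ⟨z, hzS, hzmax⟩ := exists_rel_max y.rel y.trans y.irrefl S ⟨u, huS⟩
    obtain ⟨hzc, hza, hzu⟩ := Finset.mem_filter.mp hzS
    have hzpar : y.Parent z a := by
      refine ⟨hza, fun w ⟨h1, h2⟩ => ?_⟩
      have hwmem := (y.rel_mem _ _ h1).2
      have hwS : w ∈ S := by
        refine Finset.mem_filter.mpr ⟨hwmem, h2, Or.inr ?_⟩
        rcases hzu with rfl | h'
        · exact h1
        · exact y.trans _ _ _ h' h1
      exact hzmax w hwS h1
    have hzm : z = m := huniq z hzpar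
    subst hzm
    rcases hzu with rfl | h'
    · rfl
    · exact absurd h' (hmmin u)
  have hset1 : {u | y.rel u a} = {m} := by
    ext u
    simp only [Set.mem_setOf_eq, Set.mem_singleton_iff]
    exact ⟨hanc u, fun h => h ▸ hpar.1⟩
  have hset2 : {u | y.Parent u a} = {m} := by
    ext u
    simp only [Set.mem_setOf_eq, Set.mem_singleton_iff]
    exact ⟨fun h => hanc u h.1, fun h => h ▸ ⟨hpar.1, hpar.2⟩⟩
  refine ⟨⟨m, hset1, hset2⟩, fun c mm => ?_⟩
  rw [hset1, hset2, Set.ncard_singleton]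
  congr 2
  simp [lam]
end

section
/- If ψ ∈ L²(Ω, 𝒜, ν) and μ(A) = |⟨χ_A, ψ⟩|² for A ∈ 𝒜, then μ is a grade-2 additive q-measure: for mutually disjoint A, B, C ∈ 𝒜, μ(A∪B∪C) = μ(A∪B) + μ(A∪C) + μ(B∪C) − μ(A) − μ(B) − μ(C). -/
/-! The map `A ↦ ⟨χ_A, ψ⟩` is finitely additive on disjoint sets, and `z ↦ ‖z‖²` is a quadratic
form; the third difference of a quadratic form composed with an additive map vanishes. -/

open MeasureTheory

/-- The indicator function `χ_A` of a measurable set, as an element of complex `L²(ν)`. -/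
noncomputable def chiC {Ω : Type*} [MeasurableSpace Ω] (ν : Measure Ω) [IsProbabilityMeasure ν]
    {A : Set Ω} (hA : MeasurableSet A) : Lp ℂ 2 ν :=
  indicatorConstLp 2 hA (measure_ne_top ν A) (1 : ℂ)

/-- The q-measure `μ(A) = |⟨χ_A, ψ⟩|²` of the pure q-probability operator `|ψ⟩⟨ψ|`. -/
noncomputable def qMeasPure {Ω : Type*} [MeasurableSpace Ω] (ν : Measure Ω)
    [IsProbabilityMeasure ν] (ψ : Lp ℂ 2 ν) {A : Set Ω} (hA : MeasurableSet A) : ℝ :=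
  ‖(inner ℂ (chiC ν hA) ψ : ℂ)‖ ^ 2

theorem norm_add_add_sq {𝕜 E : Type*} [RCLike 𝕜] [SeminormedAddCommGroup E]
    [InnerProductSpace 𝕜 E] (x y z : E) :
    ‖x + y + z‖ ^ 2
      = ‖x + y‖ ^ 2 + ‖x + z‖ ^ 2 + ‖y + z‖ ^ 2 - ‖x‖ ^ 2 - ‖y‖ ^ 2 - ‖z‖ ^ 2 := by
  have hxyz := norm_add_sq (𝕜 := 𝕜) (x + y) z
  have hxy := norm_add_sq (𝕜 := 𝕜) x y
  have hxz := norm_add_sq (𝕜 := 𝕜) x z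
  have hyz := norm_add_sq (𝕜 := 𝕜) y z
  rw [inner_add_left, map_add] at hxyz
  linarith

section Indicator

variable {Ω : Type*} [MeasurableSpace Ω] (ν : Measure Ω) [IsProbabilityMeasure ν]
  {A B : Set Ω} (hA : MeasurableSet A) (hB : MeasurableSet B)

theorem chiC_union (h : Disjoint A B) : chiC ν (hA.union hB) = chiC ν hA + chiC ν hB :=
  indicatorConstLp_disjoint_union hA hB (measure_ne_top ν A) (measure_ne_top ν B) h 1

theorem inner_chiC_union (ψ : Lp ℂ 2 ν) (h : Disjoint A B) :
    inner ℂ (chiC ν (hA.union hB)) ψ = inner ℂ (chiC ν hA) ψ + inner ℂ (chiC ν hB) ψ := by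
  rw [chiC_union ν hA hB h, inner_add_left]

end Indicator

/-- If `ψ ∈ L²(Ω, 𝒜, ν)` and `μ(A) = |⟨χ_A, ψ⟩|²`, then `μ` is grade-2
additive: for mutually disjoint measurable `A, B, C`,
`μ(A∪B∪C) = μ(A∪B) + μ(A∪C) + μ(B∪C) − μ(A) − μ(B) − μ(C)`. -/
theorem stmt12 {Ω : Type*} [MeasurableSpace Ω] (ν : Measure Ω) [IsProbabilityMeasure ν]
    (ψ : Lp ℂ 2 ν)
    (A B C : Set Ω) (hA : MeasurableSet A) (hB : MeasurableSet B) (hC : MeasurableSet C)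
    (hAB : Disjoint A B) (hAC : Disjoint A C) (hBC : Disjoint B C) :
    qMeasPure ν ψ ((hA.union hB).union hC)
      = qMeasPure ν ψ (hA.union hB) + qMeasPure ν ψ (hA.union hC) + qMeasPure ν ψ (hB.union hC)
        - qMeasPure ν ψ hA - qMeasPure ν ψ hB - qMeasPure ν ψ hC := by
  unfold qMeasPure
  rw [inner_chiC_union ν (hA.union hB) hC ψ (hAC.union_left hBC), inner_chiC_union ν hA hB ψ hAB,
    inner_chiC_union ν hA hC ψ hAC, inner_chiC_union ν hB hC ψ hBC]
  exact norm_add_add_sq (𝕜 := ℂ) _ _ _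
end
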